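/- arXiv:2009.06568 — 2 statements merged into one kernel-verified Lean document; each statement's English description precedes it below -/
import Mathlib

section
/- Let A be an invertible (n+1)×(n+1) real matrix and K ≥ 1. Suppose the induced projective transformation maps the box B = [-1,1]^n (viewed in the affine chart {x_{n+1}=1} of RP^n) into the box K·B = [-K,K]^n. Then for all indices i, j, we have |A_{ij}| ≤ 2K·|A_{n+1,n+1}|. -/
/-!
Along the segment `t ↦ t eⱼ`, `t ∈ [-1, 1]`, the last homogeneous coordinate of the image is the
affine function `A_{n+1,j} t + A_{n+1,n+1}`. It has no zero on `[-1, 1]`, which forces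
`|A_{n+1,j}| < |A_{n+1,n+1}|`. Every other coordinate `A_{ij} t + A_{i,n+1}` is bounded by `K` times
it; comparing `t = 1` with `t = -1` isolates `A_{ij}`, and `t = 0` bounds `A_{i,n+1}`.
-/

open Matrix

/-- The point of the affine chart `{x_{n+1} = 1}` of `ℝPⁿ`, in homogeneous coordinates. -/
def chart {n : ℕ} (x : Fin n → ℝ) : Fin (n + 1) → ℝ := Fin.snoc x 1

section OrderedField

variable {𝕜 : Type*} [Field 𝕜] [LinearOrder 𝕜] [IsStrictOrderedRing 𝕜]

theorem abs_lt_abs_of_forall_mul_add_ne_zero {a c : 𝕜}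
    (h : ∀ t : 𝕜, |t| ≤ 1 → a * t + c ≠ 0) : |a| < |c| := by
  by_contra! hca
  have ha : a ≠ 0 := by
    rintro rfl
    exact h 0 (by simp) (by simpa using hca)
  refine h (-c / a) ?_ (by field_simp; ring)
  rw [abs_div, abs_neg]
  exact div_le_one_of_le₀ hca (abs_nonneg a)

theorem abs_le_of_abs_add_le_of_abs_neg_add_le {K a b c d : 𝕜} (hK : 0 ≤ K)
    (h₁ : |b + d| ≤ K * |a + c|) (h₂ : |-b + d| ≤ K * |-a + c|) : |b| ≤ K * (|a| + |c|) := by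
  have hb : 2 * |b| ≤ |b + d| + |-b + d| :=
    calc 2 * |b| = |(b + d) - (-b + d)| := by rw [← abs_two, ← abs_mul]; ring_nf
      _ ≤ |b + d| + |-b + d| := abs_sub _ _
  have hac : |a + c| + |-a + c| ≤ 2 * (|a| + |c|) := by
    linarith [abs_add_le a c, abs_add_le (-a) c, abs_neg a]
  nlinarith

theorem abs_pi_single_le_one {ι : Type*} [DecidableEq ι] (j : ι) {t : 𝕜} (ht : |t| ≤ 1) (m : ι) :
    |(Pi.single j t : ι → 𝕜) m| ≤ 1 := by
  rcases eq_or_ne m j with rfl | h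
  · simpa using ht
  · simp [h]

end OrderedField

section MulVecChart

variable {n : ℕ} (A : Matrix (Fin (n + 1)) (Fin (n + 1)) ℝ)

theorem mulVec_chart (x : Fin n → ℝ) (k : Fin (n + 1)) :
    (A *ᵥ chart x) k = ∑ j, A k j.castSucc * x j + A k (Fin.last n) := by
  simp [chart, mulVec, dotProduct, Fin.sum_univ_castSucc]

theorem mulVec_chart_zero (k : Fin (n + 1)) : (A *ᵥ chart 0) k = A k (Fin.last n) := by
  simp [mulVec_chart]

theorem mulVec_chart_single (j : Fin n) (t : ℝ) (k : Fin (n + 1)) :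
    (A *ᵥ chart (Pi.single j t)) k = A k j.castSucc * t + A k (Fin.last n) := by
  simp [mulVec_chart, Pi.single_apply]

end MulVecChart

theorem box_estimate_general {n : ℕ} (A : Matrix (Fin (n + 1)) (Fin (n + 1)) ℝ)
    (K : ℝ) (hK : 1 ≤ K)
    (hbox : ∀ x : Fin n → ℝ, (∀ i, |x i| ≤ 1) →
      (A.mulVec (chart x)) (Fin.last n) ≠ 0 ∧
      ∀ i : Fin n,
        |(A.mulVec (chart x)) i.castSucc / (A.mulVec (chart x)) (Fin.last n)| ≤ K) :
    ∀ i j, |A i j| ≤ 2 * K * |A (Fin.last n) (Fin.last n)| := by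
  set c := A (Fin.last n) (Fin.last n)
  have hnum (x : Fin n → ℝ) (hx : ∀ i, |x i| ≤ 1) (i : Fin n) :
      |(A *ᵥ chart x) i.castSucc| ≤ K * |(A *ᵥ chart x) (Fin.last n)| := by
    have := (hbox x hx).2 i
    rwa [abs_div, div_le_iff₀ (abs_pos.2 (hbox x hx).1)] at this
  have hlast (j : Fin n) : |A (Fin.last n) j.castSucc| < |c| :=
    abs_lt_abs_of_forall_mul_add_ne_zero fun t ht => by
      simpa [mulVec_chart_single] using (hbox _ (abs_pi_single_le_one j ht)).1
  have hcol (i : Fin n) : |A i.castSucc (Fin.last n)| ≤ K * |c| := by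
    simpa [mulVec_chart_zero] using hnum 0 (by simp) i
  have hinner (i j : Fin n) :
      |A i.castSucc j.castSucc| ≤ K * (|A (Fin.last n) j.castSucc| + |c|) :=
    abs_le_of_abs_add_le_of_abs_neg_add_le (by linarith)
      (by simpa [mulVec_chart_single] using hnum _ (abs_pi_single_le_one j (t := 1) (by simp)) i)
      (by simpa [mulVec_chart_single] using hnum _ (abs_pi_single_le_one j (t := -1) (by simp)) i)
  have hc : 0 ≤ |c| := abs_nonneg c
  have hK₀ : 0 ≤ K := by linarith
  intro i j
  induction i using Fin.lastCases with
  | last =>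
    induction j using Fin.lastCases with
    | last => nlinarith
    | cast j => nlinarith [hlast j]
  | cast i =>
    induction j using Fin.lastCases with
    | last => nlinarith [hcol i]
    | cast j => nlinarith [hinner i j, mul_le_mul_of_nonneg_left (hlast j).le hK₀]

/-- **Box estimate**: if the projective transformation induced by `A` maps the box
`[-1,1]^n` (in the affine chart) into `[-K,K]^n`, then `|A i j| ≤ 2K·|A_{n+1,n+1}|`. -/
theorem box_estimate {n : ℕ} (A : Matrix (Fin (n + 1)) (Fin (n + 1)) ℝ)
    (hA : IsUnit A.det) (K : ℝ) (hK : 1 ≤ K)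
    (hbox : ∀ x : Fin n → ℝ, (∀ i, |x i| ≤ 1) →
      (A.mulVec (chart x)) (Fin.last n) ≠ 0 ∧
      ∀ i : Fin n,
        |(A.mulVec (chart x)) i.castSucc / (A.mulVec (chart x)) (Fin.last n)| ≤ K) :
    ∀ i j, |A i j| ≤ 2 * K * |A (Fin.last n) (Fin.last n)| :=
  box_estimate_general A K hK hbox
end

section
/- For each dimension n there is a constant K = K(n) > 1 such that: if Ω ⊂ ℝ^n is an open bounded convex set with centroid at the origin and inertia tensor equal to the standard quadratic form x_1² + ... + x_n², then K^{-1}·[-1,1]^n ⊆ Ω ⊆ K·[-1,1]^n. -/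
/-!
Taking the trace of `inertia Ω = ‖·‖²` shows that the second moments of `Ω` are isotropic,
`∫_Ω ⟪x, y⟫² = ‖y‖² / (n - 1)`; in particular `∫_Ω ‖x‖² = n / (n - 1)` bounds `vol Ω` from above,
so no linear form `⟪·, θ⟫` with `‖θ‖ = 1` can stay below a fixed `w > 0` in absolute value on `Ω`.
Choosing greedily points `vᵢ ∈ Ω` and unit vectors `eᵢ ⊥ v₀, …, vᵢ₋₁` with `|⟪eᵢ, vᵢ⟫| ≥ w` makes
the matrix `(⟪eᵢ, vⱼ⟫)` triangular, so the parallelepiped spanned by the `vᵢ / n` (which lies in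
`Ω`, as `0 ∈ Ω` by the last argument below) has volume `≥ (w / n)ⁿ / n!`: this bounds `vol Ω`
from below.
For `x₀ ∈ Ω`, the copy `(Ω + x₀) / 2 ⊆ Ω` has volume `2⁻ⁿ vol Ω`, and since the centroid vanishes
this gives `vol Ω · ‖x₀‖² ≤ 2ⁿ⁺² ∫_Ω ⟪x, x₀ / ‖x₀‖⟫²`, an outer radius `R`.
Finally, a hyperplane with unit normal `u` separating `z ∉ Ω` from `Ω` confines the mean-zero
function `⟪·, u⟫` to `[-R, ‖z‖]` on `Ω`, and the Bhatia–Davis inequality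
`∫ g² ≤ a b vol` for `g ∈ [-a, b]` bounds `‖z‖` from below.
-/

open MeasureTheory

noncomputable def centroid {n : ℕ} (Ω : Set (EuclideanSpace ℝ (Fin n))) :
    EuclideanSpace ℝ (Fin n) :=
  (volume Ω).toReal⁻¹ • ∫ x in Ω, x

noncomputable def inertia {n : ℕ} (Ω : Set (EuclideanSpace ℝ (Fin n)))
    (y : EuclideanSpace ℝ (Fin n)) : ℝ :=
  ∫ x in Ω, (‖x‖ ^ 2 * ‖y‖ ^ 2 - (inner ℝ x y : ℝ) ^ 2)

open Metric Set Module Bornology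
open scoped RealInnerProductSpace ENNReal Nat Matrix Pointwise

theorem setIntegral_sq_le_mul_of_forall_mem_Icc {α : Type*} [MeasurableSpace α] {μ : Measure α}
    {s : Set α} {g : α → ℝ} {a b : ℝ} (hs : MeasurableSet s) (hμs : μ s ≠ ∞)
    (hg : IntegrableOn g s μ) (hg0 : ∫ x in s, g x ∂μ = 0) (hgab : ∀ x ∈ s, g x ∈ Icc (-a) b) :
    ∫ x in s, g x ^ 2 ∂μ ≤ a * b * μ.real s := by
  have hg2 : IntegrableOn (fun x => g x ^ 2) s μ := by
    simp_rw [sq]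
    refine hg.bdd_mul hg.aestronglyMeasurable (c := max |a| |b|) ?_
    refine (ae_restrict_iff' hs).2 (.of_forall fun x hx => ?_)
    obtain ⟨hxa, hxb⟩ := hgab x hx
    rw [Real.norm_eq_abs, abs_le]
    constructor <;>
      linarith [le_abs_self a, le_abs_self b, le_max_left |a| |b|, le_max_right |a| |b|]
  have hlin : IntegrableOn (fun x => (b - a) * g x + a * b) s μ :=
    (hg.const_mul _).add (integrableOn_const hμs)
  -- `(b - g) (g + a) ≥ 0` on `s`
  calc ∫ x in s, g x ^ 2 ∂μ ≤ ∫ x in s, ((b - a) * g x + a * b) ∂μ :=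
        setIntegral_mono_on hg2 hlin hs fun x hx => by
          obtain ⟨hxa, hxb⟩ := hgab x hx
          nlinarith [mul_nonneg (sub_nonneg.2 hxb) (neg_le_iff_add_nonneg.1 hxa)]
    _ = a * b * μ.real s := by
        rw [integral_add (hg.const_mul _) (integrableOn_const hμs), integral_const_mul, hg0,
          setIntegral_const, smul_eq_mul]
        ring

theorem Convex.inv_card_smul_parallelepiped_subset {V : Type*} [AddCommGroup V] [Module ℝ V]
    {ι : Type*} [Fintype ι] {s : Set V} (hs : Convex ℝ s) (h0 : 0 ∈ s) {v : ι → V}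
    (hv : ∀ i, v i ∈ s) : ((Fintype.card ι : ℝ)⁻¹) • parallelepiped v ⊆ s := by
  rintro _ ⟨x, hx, rfl⟩
  obtain ⟨t, ht, rfl⟩ := (mem_parallelepiped_iff v x).1 hx
  rcases isEmpty_or_nonempty ι with hι | hι
  · simpa using h0
  -- an average of the points `t i • v i`, each on the segment from `0` to `v i`
  have := hs.centerMass_mem (t := Finset.univ) (w := fun _ => (1 : ℝ)) (z := fun i => t i • v i)
    (fun _ _ => zero_le_one) (by simp [Fintype.card_pos]) fun i _ =>
      hs.smul_mem_of_zero_mem h0 (hv i) ⟨ht.1 i, ht.2 i⟩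
  simpa [Finset.centerMass, Finset.smul_sum] using this

section InnerProductSpace

variable {E : Type*} [NormedAddCommGroup E] [InnerProductSpace ℝ E]

theorem pow_le_factorial_mul_abs_det_of_triangular {m : ℕ} (b : OrthonormalBasis (Fin m) ℝ E)
    {v e : Fin m → E} {w : ℝ} (hw : 0 ≤ w) (he : ∀ i, ‖e i‖ = 1)
    (htri : ∀ i j, j < i → ⟪e i, v j⟫ = 0) (hdiag : ∀ i, w ≤ |⟪e i, v i⟫|) :
    w ^ m ≤ m ! * |b.toBasis.det v| := by
  set Me : Matrix (Fin m) (Fin m) ℝ := .of fun i j => b.repr (e j) i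
  have hgram : Meᵀ * b.toBasis.toMatrix v = .of fun i j => ⟪e i, v j⟫ := by
    ext i j
    simp [Me, Matrix.mul_apply, Basis.toMatrix_apply, b.repr_apply_apply,
      real_inner_comm (e i), b.sum_inner_mul_inner]
  have htriang : (Matrix.of fun i j => ⟪e i, v j⟫).BlockTriangular id := fun i j hij => htri i j hij
  have hMe : |Me.det| ≤ m ! := by
    simpa using Matrix.det_le (A := Me) (abv := AbsoluteValue.abs) (x := 1) fun i j => by
      simpa [Me, he j] using PiLp.norm_apply_le (b.repr (e j)) i
  calc w ^ m = ∏ _ : Fin m, w := by simp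
    _ ≤ ∏ i, |⟪e i, v i⟫| := Finset.prod_le_prod (fun _ _ => hw) fun i _ => hdiag i
    _ = |Meᵀ.det| * |b.toBasis.det v| := by
        rw [Basis.det_apply, ← abs_mul, ← Matrix.det_mul, hgram,
          Matrix.det_of_isUpperTriangular htriang, Finset.abs_prod]
        rfl
    _ ≤ m ! * |b.toBasis.det v| := by rw [Matrix.det_transpose]; gcongr

variable [FiniteDimensional ℝ E]

theorem Submodule.exists_norm_eq_one_mem_orthogonal {S : Submodule ℝ E}
    (hS : finrank ℝ S < finrank ℝ E) : ∃ θ ∈ Sᗮ, ‖θ‖ = 1 := by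
  have : Nontrivial Sᗮ := by
    rw [← finrank_pos_iff (R := ℝ)]
    have := S.finrank_add_finrank_orthogonal
    omega
  obtain ⟨θ, hθ⟩ := exists_norm_eq Sᗮ zero_le_one
  exact ⟨θ, θ.2, hθ⟩

theorem exists_triangular_family_of_forall_exists_le_abs_inner {s : Set E} {w : ℝ}
    (hs : ∀ θ : E, ‖θ‖ = 1 → ∃ p ∈ s, w ≤ |⟪θ, p⟫|) :
    ∀ k ≤ finrank ℝ E, ∃ v e : Fin k → E, (∀ i, v i ∈ s) ∧ (∀ i, ‖e i‖ = 1) ∧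
      (∀ i j, j < i → ⟪e i, v j⟫ = 0) ∧ ∀ i, w ≤ |⟪e i, v i⟫| := by
  intro k hk
  induction k with
  | zero => exact ⟨finZeroElim, finZeroElim, finZeroElim, finZeroElim, finZeroElim, finZeroElim⟩
  | succ k ih =>
    obtain ⟨v, e, hvs, he, htri, hdiag⟩ := ih (by omega)
    obtain ⟨θ, hθv, hθ⟩ := Submodule.exists_norm_eq_one_mem_orthogonal
      ((finrank_range_le_card v).trans_lt (by simpa using hk))
    obtain ⟨p, hps, hp⟩ := hs θ hθ
    refine ⟨Fin.snoc v p, Fin.snoc e θ, ?_⟩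
    simp only [Fin.forall_fin_succ', Fin.snoc_castSucc, Fin.snoc_last, Fin.castSucc_lt_castSucc_iff,
      Fin.castSucc_lt_last, not_lt_of_gt, lt_irrefl, IsEmpty.forall_iff, forall_const, and_true]
    exact ⟨⟨hvs, hps⟩, ⟨he, hθ⟩, ⟨htri, fun i =>
      Submodule.inner_left_of_mem_orthogonal (Submodule.subset_span (mem_range_self i)) hθv⟩,
      ⟨hdiag, hp⟩⟩

variable [MeasurableSpace E] [BorelSpace E]

theorem ofReal_le_volume_of_forall_exists_le_abs_inner {s : Set E} (hs : Convex ℝ s) (h0 : 0 ∈ s)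
    {w : ℝ} (hw : 0 ≤ w) (hthick : ∀ θ : E, ‖θ‖ = 1 → ∃ p ∈ s, w ≤ |⟪θ, p⟫|) :
    ENNReal.ofReal ((w / finrank ℝ E) ^ finrank ℝ E / (finrank ℝ E) !) ≤ volume s := by
  set d := finrank ℝ E
  obtain ⟨v, e, hvs, he, htri, hdiag⟩ :=
    exists_triangular_family_of_forall_exists_le_abs_inner hthick d le_rfl
  set b := stdOrthonormalBasis ℝ E
  have hdet := pow_le_factorial_mul_abs_det_of_triangular b hw he htri hdiag
  calc ENNReal.ofReal ((w / d) ^ d / d !)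
      ≤ ENNReal.ofReal |((d : ℝ)⁻¹) ^ d| * ENNReal.ofReal |b.toBasis.det v| := by
        rw [← ENNReal.ofReal_mul (abs_nonneg _), abs_of_nonneg (by positivity),
          show (w / d) ^ d / d ! = ((d : ℝ)⁻¹) ^ d * (w ^ d / d !) by ring]
        gcongr
        rwa [div_le_iff₀' (by positivity)]
    _ = volume ((d : ℝ)⁻¹ • parallelepiped v) := by
        rw [Measure.addHaar_smul, ← b.addHaar_eq_volume, Measure.addHaar_parallelepiped]
    _ ≤ volume s := measure_mono (by simpa using hs.inv_card_smul_parallelepiped_subset h0 hvs)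

theorem Continuous.integrableOn_of_isBounded {F : Type*} [NormedAddCommGroup F] {f : E → F}
    (hf : Continuous f) {s : Set E} (hs : IsBounded s) : IntegrableOn f s :=
  (hf.continuousOn.integrableOn_compact hs.isCompact_closure).mono_set subset_closure

theorem setIntegral_norm_sq_eq_sum_setIntegral_inner_sq {ι : Type*} [Fintype ι]
    (b : OrthonormalBasis ι ℝ E) {s : Set E} (hs : IsBounded s) :
    ∫ x in s, ‖x‖ ^ 2 = ∑ i, ∫ x in s, ⟪x, b i⟫ ^ 2 := by
  simp_rw [← b.sum_sq_inner_left]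
  exact integral_finsetSum _ fun i _ =>
    ((continuous_id.inner continuous_const).pow 2).integrableOn_of_isBounded hs

theorem setIntegral_inner_eq_zero {s : Set E} (hs : IsBounded s) (hcent : ∫ x in s, x = 0)
    (θ : E) : ∫ x in s, ⟪x, θ⟫ = 0 := by
  simp_rw [real_inner_comm θ]
  rw [integral_inner (f := fun x : E => x) (continuous_id.integrableOn_of_isBounded hs), hcent,
    inner_zero_right]

theorem measureReal_le_measureReal_ball_add_setIntegral_norm_sq {s : Set E} (hs : MeasurableSet s)
    (hbd : IsBounded s) :
    volume.real s ≤ volume.real (ball (0 : E) 1) + ∫ x in s, ‖x‖ ^ 2 := by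
  have hfin : volume s ≠ ∞ := hbd.measure_lt_top.ne
  have hind : IntegrableOn ((ball (0 : E) 1).indicator fun _ => (1 : ℝ)) s :=
    (integrableOn_const hfin).indicator measurableSet_ball
  have hsq : IntegrableOn (fun x : E => ‖x‖ ^ 2) s :=
    (continuous_norm.pow 2).integrableOn_of_isBounded hbd
  calc volume.real s = ∫ _ in s, (1 : ℝ) := by simp
    _ ≤ ∫ x in s, ((ball (0 : E) 1).indicator (fun _ => (1 : ℝ)) x + ‖x‖ ^ 2) := by
        refine setIntegral_mono_on (integrableOn_const hfin) (hind.add hsq) hs fun x _ => ?_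
        by_cases hx : x ∈ ball (0 : E) 1
        · simp [hx]
        · simp only [indicator_of_notMem hx, mem_ball_zero_iff, not_lt] at hx ⊢
          nlinarith
    _ ≤ volume.real (ball (0 : E) 1) + ∫ x in s, ‖x‖ ^ 2 := by
        rw [integral_add hind hsq, setIntegral_indicator measurableSet_ball]
        simp only [setIntegral_const, smul_eq_mul, mul_one]
        gcongr
        · exact measure_ball_lt_top.ne
        · exact inter_subset_right

theorem exists_le_abs_inner_of_sq_mul_lt {s : Set E} (hs : MeasurableSet s) (hbd : IsBounded s)
    {w : ℝ} (θ : E) (h : w ^ 2 * volume.real s < ∫ x in s, ⟪x, θ⟫ ^ 2) :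
    ∃ p ∈ s, w ≤ |⟪θ, p⟫| := by
  by_contra! hlt
  refine h.not_ge ?_
  have hint : IntegrableOn (fun x => ⟪x, θ⟫ ^ 2) s :=
    ((continuous_id.inner continuous_const).pow 2).integrableOn_of_isBounded hbd
  calc ∫ x in s, ⟪x, θ⟫ ^ 2 ≤ ∫ _ in s, w ^ 2 :=
        setIntegral_mono_on hint (integrableOn_const hbd.measure_lt_top.ne) hs fun x hx => by
          rw [real_inner_comm, ← sq_abs]
          exact pow_le_pow_left₀ (abs_nonneg _) (hlt x hx).le 2
    _ = w ^ 2 * volume.real s := by rw [setIntegral_const, smul_eq_mul, mul_comm]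

theorem le_mul_norm_mul_measureReal_of_notMem {s : Set E} (hop : IsOpen s) (hconv : Convex ℝ s)
    (hbd : IsBounded s) (hne : s.Nonempty) (hcent : ∫ x in s, x = 0) {c R : ℝ}
    (hR : ∀ x ∈ s, ‖x‖ ≤ R) (hmom : ∀ y, c * ‖y‖ ^ 2 ≤ ∫ x in s, ⟪x, y⟫ ^ 2) {z : E}
    (hz : z ∉ s) : c ≤ R * ‖z‖ * volume.real s := by
  obtain ⟨f, hf⟩ := geometric_hahn_banach_open_point hconv hop hz
  set u := (InnerProductSpace.toDual ℝ E).symm f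
  have hu : ∀ x, ⟪x, u⟫ = f x := fun x => by
    rw [real_inner_comm, InnerProductSpace.toDual_symm_apply]
  obtain ⟨x₁, hx₁⟩ := hne
  have hu0 : 0 < ‖u‖ := norm_pos_iff.2 fun h => by
    simpa [← hu, h] using hf x₁ hx₁
  have hR0 : 0 ≤ R := (norm_nonneg _).trans (hR x₁ hx₁)
  have hrange : ∀ x ∈ s, ⟪x, u⟫ ∈ Icc (-(R * ‖u‖)) ⟪z, u⟫ := fun x hx =>
    ⟨neg_le_of_abs_le ((abs_real_inner_le_norm x u).trans (by gcongr; exact hR x hx)),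
      by rw [hu, hu]; exact (hf x hx).le⟩
  have hvar := setIntegral_sq_le_mul_of_forall_mem_Icc hop.measurableSet hbd.measure_lt_top.ne
    ((continuous_id.inner continuous_const).integrableOn_of_isBounded hbd)
    (setIntegral_inner_eq_zero hbd hcent u) hrange
  refine le_of_mul_le_mul_right ?_ (pow_pos hu0 2)
  calc c * ‖u‖ ^ 2 ≤ R * ‖u‖ * ⟪z, u⟫ * volume.real s := (hmom u).trans hvar
    _ ≤ R * ‖u‖ * (‖z‖ * ‖u‖) * volume.real s := by gcongr; exact real_inner_le_norm z u
    _ = R * ‖z‖ * volume.real s * ‖u‖ ^ 2 := by ring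

theorem measureReal_mul_inner_sq_le {s : Set E} (hs : Convex ℝ s) (hmeas : MeasurableSet s)
    (hbd : IsBounded s) (hcent : ∫ x in s, x = 0) {x₀ : E} (hx₀ : x₀ ∈ s) (θ : E) :
    volume.real s * ⟪x₀, θ⟫ ^ 2 ≤ 2 ^ (finrank ℝ E + 2) * ∫ x in s, ⟪x, θ⟫ ^ 2 := by
  set d := finrank ℝ E
  set H := ⟪x₀, θ⟫
  set Q := ∫ x in s, ⟪x, θ⟫ ^ 2
  let h : E → E := fun y => (2⁻¹ : ℝ) • (y + x₀)
  have hinner : ∀ y, ⟪h y, θ⟫ = 2⁻¹ * (⟪y, θ⟫ + H) := fun y => by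
    simp only [h, real_inner_smul_left, inner_add_left, H]
  have hint : IntegrableOn (fun x => ⟪x, θ⟫) s :=
    (continuous_id.inner continuous_const).integrableOn_of_isBounded hbd
  have hint2 : IntegrableOn (fun x => ⟪x, θ⟫ ^ 2) s :=
    ((continuous_id.inner continuous_const).pow 2).integrableOn_of_isBounded hbd
  have hfin : volume s ≠ ∞ := hbd.measure_lt_top.ne
  have hexpand : ∫ y in s, (⟪y, θ⟫ + H) ^ 2 = Q + volume.real s * H ^ 2 := by
    have hsq : ∀ y, (⟪y, θ⟫ + H) ^ 2 = ⟪y, θ⟫ ^ 2 + 2 * H * ⟪y, θ⟫ + H ^ 2 := fun y => by ring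
    simp_rw [hsq]
    have hlin : IntegrableOn (fun y => ⟪y, θ⟫ ^ 2 + 2 * H * ⟪y, θ⟫) s :=
      hint2.add (hint.const_mul _)
    rw [integral_add hlin (integrableOn_const hfin),
      integral_add hint2 (hint.const_mul _), integral_const_mul,
      setIntegral_inner_eq_zero hbd hcent, setIntegral_const, smul_eq_mul]
    ring
  have hsub : h '' s ⊆ s := by
    rintro _ ⟨y, hy, rfl⟩
    simpa [h, smul_add] using hs hy hx₀ (by norm_num : (0 : ℝ) ≤ 2⁻¹) (by norm_num) (by norm_num)
  have himage :
      ∫ x in h '' s, ⟪x, θ⟫ ^ 2 = (2⁻¹ : ℝ) ^ d * (4⁻¹ * (Q + volume.real s * H ^ 2)) := by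
    have hderiv : ∀ y, HasFDerivAt h ((2⁻¹ : ℝ) • ContinuousLinearMap.id ℝ E) y := fun y =>
      ((hasFDerivAt_id y).add_const x₀).const_smul (2⁻¹ : ℝ)
    rw [integral_image_eq_integral_abs_det_fderiv_smul volume hmeas
      (fun y _ => (hderiv y).hasFDerivWithinAt) (fun y _ z _ hyz => by simpa [h] using hyz)]
    simp only [hinner, ContinuousLinearMap.det, ContinuousLinearMap.toLinearMap_smul,
      ContinuousLinearMap.coe_id, LinearMap.det_smul, LinearMap.det_id]
    rw [← hexpand, ← integral_const_mul, ← integral_const_mul]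
    congr 1 with y
    rw [mul_one, abs_of_pos (by positivity), smul_eq_mul]
    ring
  have hshrink := setIntegral_mono_set hint2 (ae_of_all _ fun _ => sq_nonneg _) hsub.eventuallyLE
  rw [himage] at hshrink
  have hscale : (2 : ℝ) ^ (d + 2) * ((2⁻¹ : ℝ) ^ d * (4⁻¹ * (Q + volume.real s * H ^ 2)))
      = Q + volume.real s * H ^ 2 := by
    rw [pow_add, inv_pow]
    field_simp
    norm_num
  have hQ : 0 ≤ Q := integral_nonneg fun _ => sq_nonneg _
  nlinarith [mul_le_mul_of_nonneg_left hshrink (by positivity : (0 : ℝ) ≤ 2 ^ (d + 2))]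

theorem zero_mem_of_le_setIntegral_inner_sq {s : Set E} (hop : IsOpen s) (hconv : Convex ℝ s)
    (hbd : IsBounded s) (hne : s.Nonempty) (hcent : ∫ x in s, x = 0) {c : ℝ} (hc : 0 < c)
    (hmom : ∀ y, c * ‖y‖ ^ 2 ≤ ∫ x in s, ⟪x, y⟫ ^ 2) : (0 : E) ∈ s := by
  by_contra h0
  obtain ⟨R, hR⟩ := hbd.exists_norm_le
  have := le_mul_norm_mul_measureReal_of_notMem hop hconv hbd hne hcent hR hmom h0
  simp only [norm_zero, mul_zero, zero_mul] at this
  linarith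

theorem norm_sq_le_of_le_measureReal {s : Set E} (hs : Convex ℝ s) (hmeas : MeasurableSet s)
    (hbd : IsBounded s) (hcent : ∫ x in s, x = 0) {c m : ℝ} (hc : 0 ≤ c) (hm : 0 < m)
    (hvol : m ≤ volume.real s) (hmom : ∀ y, ∫ x in s, ⟪x, y⟫ ^ 2 ≤ c * ‖y‖ ^ 2) {x : E}
    (hx : x ∈ s) : ‖x‖ ^ 2 ≤ 2 ^ (finrank ℝ E + 2) * c / m := by
  rcases (norm_nonneg x).eq_or_lt with hx0 | hx0
  · rw [← hx0, zero_pow two_ne_zero]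
    positivity
  have key := measureReal_mul_inner_sq_le hs hmeas hbd hcent hx x
  rw [real_inner_self_eq_norm_sq] at key
  rw [le_div_iff₀ hm]
  refine le_of_mul_le_mul_right ?_ (pow_pos hx0 2)
  calc ‖x‖ ^ 2 * m * ‖x‖ ^ 2 ≤ volume.real s * (‖x‖ ^ 2) ^ 2 := by nlinarith
    _ ≤ 2 ^ (finrank ℝ E + 2) * (c * ‖x‖ ^ 2) := key.trans (by gcongr; exact hmom x)
    _ = 2 ^ (finrank ℝ E + 2) * c * ‖x‖ ^ 2 := by ring

theorem exists_ball_subset_subset_closedBall_of_setIntegral_inner_sq {c : ℝ} (hc : 0 < c) :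
    ∃ r R : ℝ, 0 < r ∧ 0 < R ∧ ∀ s : Set E, IsOpen s → IsBounded s → Convex ℝ s → s.Nonempty →
      ∫ x in s, x = 0 → (∀ y, ∫ x in s, ⟪x, y⟫ ^ 2 = c * ‖y‖ ^ 2) →
      ball 0 r ⊆ s ∧ s ⊆ closedBall 0 R := by
  set d := finrank ℝ E
  -- `V` bounds the volume from above, hence every direction has width `≥ w`, so `m` bounds the
  -- volume from below, and `R` is an outer radius
  set V := volume.real (ball (0 : E) 1) + d * c
  set w := √(c / (2 * V))
  set m := (w / d) ^ d / (d ! : ℝ)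
  set R := √(2 ^ (d + 2) * c / m)
  have hV : 0 < V := add_pos_of_pos_of_nonneg
    (ENNReal.toReal_pos (measure_ball_pos volume 0 one_pos).ne' measure_ball_lt_top.ne)
    (by positivity)
  have hw : 0 < w := Real.sqrt_pos.2 (by positivity)
  have hm : 0 < m := by
    rcases d.eq_zero_or_pos with hd | hd
    · simp [m, hd]
    · exact div_pos (pow_pos (div_pos hw (by exact_mod_cast hd)) _) (by positivity)
  have hR : 0 < R := Real.sqrt_pos.2 (by positivity)
  refine ⟨c / (R * V), R, by positivity, hR, fun s hop hbd hconv hne hcent hmom => ?_⟩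
  have hmeas := hop.measurableSet
  have hvol_le : volume.real s ≤ V := by
    have := measureReal_le_measureReal_ball_add_setIntegral_norm_sq hmeas hbd
    simpa [setIntegral_norm_sq_eq_sum_setIntegral_inner_sq (stdOrthonormalBasis ℝ E) hbd, hmom,
      d, V] using this
  have h0 : 0 ∈ s :=
    zero_mem_of_le_setIntegral_inner_sq hop hconv hbd hne hcent hc fun y => (hmom y).ge
  have hthick : ∀ θ : E, ‖θ‖ = 1 → ∃ p ∈ s, w ≤ |⟪θ, p⟫| := fun θ hθ =>
    exists_le_abs_inner_of_sq_mul_lt hmeas hbd θ <| by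
      rw [hmom, hθ, Real.sq_sqrt (by positivity)]
      calc c / (2 * V) * volume.real s ≤ c / (2 * V) * V := by gcongr
        _ < c * 1 ^ 2 := by field_simp; linarith
  have hvol_ge : m ≤ volume.real s := (ENNReal.ofReal_le_iff_le_toReal hbd.measure_lt_top.ne).1
    (ofReal_le_volume_of_forall_exists_le_abs_inner hconv h0 hw.le hthick)
  have hout : s ⊆ closedBall 0 R := fun x hx => by
    rw [mem_closedBall_zero_iff, ← abs_norm]
    exact Real.abs_le_sqrt (norm_sq_le_of_le_measureReal hconv hmeas hbd hcent hc.le hm hvol_ge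
      (fun y => (hmom y).le) hx)
  refine ⟨fun z hz => ?_, hout⟩
  by_contra hzs
  have hc_le := le_mul_norm_mul_measureReal_of_notMem hop hconv hbd hne hcent
    (fun x hx => mem_closedBall_zero_iff.1 (hout hx)) (fun y => (hmom y).ge) hzs
  rw [mem_ball_zero_iff, lt_div_iff₀ (by positivity)] at hz
  nlinarith [mul_le_mul_of_nonneg_left hvol_le (by positivity : 0 ≤ R * ‖z‖)]

end InnerProductSpace

section EuclideanSpace

variable {n : ℕ} {Ω : Set (EuclideanSpace ℝ (Fin n))}

theorem setIntegral_eq_zero_of_centroid_eq_zero (h0 : volume Ω ≠ 0) (hfin : volume Ω ≠ ∞)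
    (h : centroid Ω = 0) : ∫ x in Ω, x = 0 :=
  (smul_eq_zero.1 h).resolve_left (inv_ne_zero (ENNReal.toReal_ne_zero.2 ⟨h0, hfin⟩))

theorem setIntegral_inner_sq_of_inertia_eq_norm_sq (hbd : IsBounded Ω)
    (h : ∀ y, inertia Ω y = ‖y‖ ^ 2) (y : EuclideanSpace ℝ (Fin n)) :
    ∫ x in Ω, ⟪x, y⟫ ^ 2 = ((∫ x in Ω, ‖x‖ ^ 2) - 1) * ‖y‖ ^ 2 := by
  have hy := h y
  rw [inertia, integral_sub
    ((by fun_prop : Continuous fun x : EuclideanSpace ℝ (Fin n) => ‖x‖ ^ 2 * ‖y‖ ^ 2)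
      |>.integrableOn_of_isBounded hbd)
    ((by fun_prop : Continuous fun x : EuclideanSpace ℝ (Fin n) => ⟪x, y⟫ ^ 2)
      |>.integrableOn_of_isBounded hbd),
    integral_mul_const] at hy
  linear_combination -hy

-- the second moment tensor has trace `∫ ‖x‖²` and, by the previous lemma, diagonal entries
-- `∫ ‖x‖² - 1`
theorem natCast_sub_one_mul_setIntegral_norm_sq_sub_one_eq_one (hbd : IsBounded Ω)
    (h : ∀ y, inertia Ω y = ‖y‖ ^ 2) : ((n : ℝ) - 1) * ((∫ x in Ω, ‖x‖ ^ 2) - 1) = 1 := by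
  have htrace := setIntegral_norm_sq_eq_sum_setIntegral_inner_sq (EuclideanSpace.basisFun (Fin n) ℝ)
    hbd
  simp only [setIntegral_inner_sq_of_inertia_eq_norm_sq hbd h, OrthonormalBasis.norm_eq_one,
    one_pow, mul_one, Finset.sum_const, Finset.card_univ, Fintype.card_fin, nsmul_eq_mul] at htrace
  linear_combination -htrace

theorem setIntegral_inner_sq_eq_inv_mul_of_inertia_eq_norm_sq (hbd : IsBounded Ω)
    (h : ∀ y, inertia Ω y = ‖y‖ ^ 2) (y : EuclideanSpace ℝ (Fin n)) :
    ∫ x in Ω, ⟪x, y⟫ ^ 2 = ((n : ℝ) - 1)⁻¹ * ‖y‖ ^ 2 := by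
  rw [setIntegral_inner_sq_of_inertia_eq_norm_sq hbd h,
    eq_inv_of_mul_eq_one_right (natCast_sub_one_mul_setIntegral_norm_sq_sub_one_eq_one hbd h)]

theorem cube_subset_closedBall {t : ℝ} (ht : 0 ≤ t) :
    {x : EuclideanSpace ℝ (Fin n) | ∀ i, |x i| ≤ t} ⊆ closedBall 0 (√n * t) := fun x hx => by
  rw [mem_closedBall_zero_iff, EuclideanSpace.norm_eq, ← Real.sqrt_sq ht, ← Real.sqrt_mul
    n.cast_nonneg]
  gcongr
  simpa using Finset.sum_le_sum fun i (_ : i ∈ Finset.univ) =>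
    pow_le_pow_left₀ (abs_nonneg _) (hx i) 2

theorem closedBall_subset_cube (R : ℝ) :
    closedBall (0 : EuclideanSpace ℝ (Fin n)) R ⊆ {x | ∀ i, |x i| ≤ R} := fun x hx i =>
  (PiLp.norm_apply_le x i).trans (mem_closedBall_zero_iff.1 hx)

end EuclideanSpace

/-- For each dimension `n` there is `K = K(n) > 1` such that every open bounded convex set
with centroid `0` and inertia tensor `x₁² + ⋯ + xₙ²` satisfies
`K⁻¹·[-1,1]ⁿ ⊆ Ω ⊆ K·[-1,1]ⁿ`. -/
theorem john_position_boxes (n : ℕ) :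
    ∃ K : ℝ, 1 < K ∧
      ∀ Ω : Set (EuclideanSpace ℝ (Fin n)),
        IsOpen Ω → Bornology.IsBounded Ω → Convex ℝ Ω → Ω.Nonempty →
        centroid Ω = 0 → (∀ y, inertia Ω y = ‖y‖ ^ 2) →
        ({x : EuclideanSpace ℝ (Fin n) | ∀ i, |x i| ≤ K⁻¹} ⊆ Ω ∧
          Ω ⊆ {x : EuclideanSpace ℝ (Fin n) | ∀ i, |x i| ≤ K}) := by
  rcases lt_or_ge n 2 with hn | hn
  · refine ⟨2, one_lt_two, fun Ω _ hbd _ hne _ hin => ?_⟩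
    interval_cases n
    · exact ⟨fun x _ => Subsingleton.elim hne.some x ▸ hne.some_mem, fun _ _ i => i.elim0⟩
    · -- for `n = 1` the trace identity reads `0 = 1`
      simpa using natCast_sub_one_mul_setIntegral_norm_sq_sub_one_eq_one hbd hin
  have hn' : (2 : ℝ) ≤ n := by exact_mod_cast hn
  have hc : 0 < ((n : ℝ) - 1)⁻¹ := inv_pos.2 (by linarith)
  obtain ⟨r, R, hr, hR, hbodies⟩ :=
    exists_ball_subset_subset_closedBall_of_setIntegral_inner_sq (E := EuclideanSpace ℝ (Fin n)) hc
  set K := max (√n / r) R + 1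
  have hK : 0 < K := by positivity
  refine ⟨K, by linarith [le_max_right (√n / r) R], fun Ω hop hbd hconv hne hcent hin => ?_⟩
  obtain ⟨hball, hcl⟩ := hbodies Ω hop hbd hconv hne (setIntegral_eq_zero_of_centroid_eq_zero
    (hop.measure_pos volume hne).ne' hbd.measure_lt_top.ne hcent)
    (setIntegral_inner_sq_eq_inv_mul_of_inertia_eq_norm_sq hbd hin)
  refine ⟨(cube_subset_closedBall (inv_nonneg.2 hK.le)).trans
    ((closedBall_subset_ball ?_).trans hball), hcl.trans
    ((closedBall_subset_closedBall (by linarith [le_max_right (√n / r) R])).trans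
      (closedBall_subset_cube K))⟩
  rw [← div_eq_mul_inv, div_lt_iff₀ hK, ← div_lt_iff₀' hr]
  linarith [le_max_left (√n / r) R]
end
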